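/- Let {(A_{i,ℓ}, A_{i,r}, A_{i,c})}_{i∈I} be a family of triples of subalgebras of a noncommutative probability space (A,φ) that is combinatorially free-free-Boolean independent. Let n ≥ 1, χ : {1,…,n} → {ℓ,r,c}, and ω₁, ω₂ : {1,…,n} → I with ω₁({1,…,n}) ∩ ω₂({1,…,n}) = ∅, and let z_{1,k} ∈ A_{ω₁(k),χ(k)} and z_{2,k} ∈ A_{ω₂(k),χ(k)} for all k. Then κ_{χ,1ₙ}(z_{1,1}+z_{2,1},…,z_{1,n}+z_{2,n}) = κ_{χ,1ₙ}(z_{1,1},…,z_{1,n}) + κ_{χ,1ₙ}(z_{2,1},…,z_{2,n}). -/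

import Mathlib

namespace FFB

/-- The three letters ℓ, c, r labelling the faces. -/
inductive Letter : Type where
  | l | c | r
deriving DecidableEq

/-- `x` is one of the letters `ℓ`, `c`. -/
def isLC (x : Letter) : Prop := x = Letter.l ∨ x = Letter.c

variable {α : Type*}

/-- The total order `≺_χ` on the index set determined by `χ`:
the elements of `χ⁻¹{ℓ,c}` in increasing order followed by the elements of
`χ⁻¹{r}` in decreasing order. -/
def chiLT [LT α] (χ : α → Letter) (i j : α) : Prop :=
  (isLC (χ i) ∧ isLC (χ j) ∧ i < j)
  ∨ (isLC (χ i) ∧ χ j = Letter.r)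
  ∨ (χ i = Letter.r ∧ χ j = Letter.r ∧ j < i)

/-- A partition (equivalence relation) `π` is `χ`-noncrossing if there is no quadruple
`s₁ ≺_χ r₁ ≺_χ s₂ ≺_χ r₂` with `s₁ ∼ s₂`, `r₁ ∼ r₂` lying in different blocks. -/
def ChiNoncrossing [LT α] (χ : α → Letter) (π : Setoid α) : Prop :=
  ∀ s₁ r₁ s₂ r₂ : α, chiLT χ s₁ r₁ → chiLT χ r₁ s₂ → chiLT χ s₂ r₂ →
    π s₁ s₂ → π r₁ r₂ → π s₁ r₁

/-- A partition `π` is `χ`-interval if whenever `i < j < k`, `i ∼ k` and `χ j = c`,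
then `i, j, k` all lie in the same block. -/
def ChiInterval [LT α] (χ : α → Letter) (π : Setoid α) : Prop :=
  ∀ i j k : α, i < j → j < k → χ j = Letter.c → π i k → π i j

/-- The set of interval-bi-noncrossing partitions with respect to `χ`. -/
def IBNC [LT α] (χ : α → Letter) : Set (Setoid α) :=
  {π | ChiNoncrossing χ π ∧ ChiInterval χ π}

/-- The set of `χ`-noncrossing partitions. -/
def NC [LT α] (χ : α → Letter) : Set (Setoid α) :=
  {π | ChiNoncrossing χ π}

/-- Restriction of a partition of `α` to a subset `V ⊆ α`. -/
def restrict (V : Set α) (σ : Setoid α) : Setoid V := Setoid.comap Subtype.val σ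

/-- Restriction of `χ` to a subset `V ⊆ α`. -/
def restChi (V : Set α) (χ : α → Letter) : V → Letter := fun x => χ x.1

/- `mu` is the Möbius function of the finite poset `P` (with the induced order):
it is the (two-sided) convolution inverse of the zeta function. -/
open Classical in
def IsMobius {β : Type*} [PartialOrder β] (P : Set β) (mu : β → β → ℂ) : Prop :=
  ∀ a ∈ P, ∀ b ∈ P, a ≤ b →
    ((∑ᶠ c ∈ {c | c ∈ P ∧ a ≤ c ∧ c ≤ b}, mu a c) = if a = b then 1 else 0) ∧
    ((∑ᶠ c ∈ {c | c ∈ P ∧ a ≤ c ∧ c ≤ b}, mu c b) = if a = b then 1 else 0)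

section Moments

variable {A : Type*} [Ring A] [LinearOrder α] [Finite α]

/-- `φ_V(z₁,…,zₙ) = φ(z_{l₁} ⋯ z_{l_k})` where `V = {l₁ < ⋯ < l_k}`. -/
noncomputable def phiV (φ : A → ℂ) (z : α → A) (V : Set α) : ℂ :=
  φ (((Set.toFinite V).toFinset.sort (· ≤ ·)).map z).prod

/-- `φ_σ(z₁,…,zₙ) = ∏_{V ∈ σ} φ_V(z₁,…,zₙ)`. -/
noncomputable def phiPart (φ : A → ℂ) (z : α → A) (σ : Setoid α) : ℂ :=
  ∏ᶠ q : Quotient σ, phiV φ z {y | Quotient.mk σ y = q}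

/-- The free-free-Boolean cumulant
`κ_{χ,π}(z₁,…,zₙ) = Σ_{σ ∈ IBNC(χ), σ ≤ π} μ_{IBNC(χ)}(σ,π) φ_σ(z₁,…,zₙ)`,
where `mu` is (a function which is) the Möbius function of `IBNC(χ)`. -/
noncomputable def cum (φ : A → ℂ) (χ : α → Letter)
    (mu : Setoid α → Setoid α → ℂ) (z : α → A) (π : Setoid α) : ℂ :=
  ∑ᶠ σ ∈ {σ | σ ∈ IBNC χ ∧ σ ≤ π}, mu σ π * phiPart φ z σ

end Moments

/-- Combinatorial free-free-Boolean independence: mixed cumulants vanish.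
`F i x` is the face of the `i`-th triple labelled by the letter `x`. -/
def CombFFB {A : Type*} [Ring A] [Algebra ℂ A] (φ : A →ₗ[ℂ] ℂ) {I : Type*}
    (F : I → Letter → NonUnitalSubalgebra ℂ A) : Prop :=
  ∀ (n : ℕ) (χ : Fin n → Letter) (ω : Fin n → I) (z : Fin n → A),
    (∀ k, z k ∈ F (ω k) (χ k)) → (¬ ∃ i, ∀ k, ω k = i) →
    ∀ mu : Setoid (Fin n) → Setoid (Fin n) → ℂ, IsMobius (IBNC χ) mu →
      cum (⇑φ) χ mu z ⊤ = 0

end FFB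

/-! Each argument `z k` lies in exactly one block of `σ`, where it enters a single factor of the
form `φ (a * z k * b)`; hence `φ_σ`, and with it every cumulant `κ_{χ,π}`, is multilinear.
Expanding `κ_{χ,1ₙ}(z₁ + z₂)` gives the sum of `κ_{χ,1ₙ}` over all `2ⁿ` choices of `z₁ k` or `z₂ k`
in each slot. A mixed choice has non-constant colours by disjointness of the ranges of `ω₁` and
`ω₂`, so its cumulant vanishes, and only the two pure terms survive (they differ since `n ≥ 1`). -/

section ListProd

variable {α M : Type*} [DecidableEq α] [Monoid M]

theorem List.prod_map_update_of_notMem {L : List α} {k : α} (hk : k ∉ L) (z : α → M) (v : M) :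
    (L.map (Function.update z k v)).prod = (L.map z).prod :=
  congrArg List.prod <| List.map_congr_left fun _ hx =>
    Function.update_of_ne (ne_of_mem_of_not_mem hx hk) _ _

theorem List.Nodup.exists_prod_map_update_eq_mul_mul {L : List α} (hL : L.Nodup) {k : α}
    (hk : k ∈ L) (z : α → M) :
    ∃ a b : M, ∀ v, (L.map (Function.update z k v)).prod = a * v * b := by
  obtain ⟨s, t, rfl⟩ := List.append_of_mem hk
  have hst : k ∉ s ∧ k ∉ t := by simpa using (List.nodup_middle.mp hL).notMem
  refine ⟨(s.map z).prod, (t.map z).prod, fun v => ?_⟩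
  simp [List.prod_map_update_of_notMem, hst, mul_assoc]

end ListProd

namespace FFB

instance {α : Type*} [Finite α] : Finite (Setoid α) :=
  Finite.of_injective (fun s : Setoid α => ⇑s) fun _ _ => Setoid.eq_iff_rel_eq.mpr

section Multilinear

variable {α A : Type*} [LinearOrder α] [Finite α] [Ring A]

theorem phiV_update_of_notMem [DecidableEq α] (φ : A → ℂ) (z : α → A) {k : α} (v : A)
    {V : Set α} (hk : k ∉ V) : phiV φ (Function.update z k v) V = phiV φ z V := by
  rw [phiV, phiV, List.prod_map_update_of_notMem]
  simpa using hk

theorem exists_phiV_update_eq [DecidableEq α] (φ : A → ℂ) (z : α → A) {k : α} {V : Set α}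
    (hk : k ∈ V) : ∃ a b : A, ∀ v, phiV φ (Function.update z k v) V = φ (a * v * b) := by
  obtain ⟨a, b, h⟩ := (Finset.sort_nodup (Set.toFinite V).toFinset (· ≤ ·))
    |>.exists_prod_map_update_eq_mul_mul (by simpa using hk) z
  exact ⟨a, b, fun v => congrArg φ (h v)⟩

theorem exists_phiPart_update_eq [DecidableEq α] (φ : A → ℂ) (σ : Setoid α) (z : α → A)
    (k : α) :
    ∃ (c : ℂ) (a b : A), ∀ v, phiPart φ (Function.update z k v) σ = c * φ (a * v * b) := by
  classical
  cases nonempty_fintype (Quotient σ)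
  let block (q : Quotient σ) : Set α := {y | Quotient.mk σ y = q}
  obtain ⟨a, b, hk⟩ := exists_phiV_update_eq φ z (V := block ⟦k⟧) rfl
  have hrest (v : A) : ∏ q ∈ Finset.univ.erase ⟦k⟧, phiV φ (Function.update z k v) (block q)
      = ∏ q ∈ Finset.univ.erase ⟦k⟧, phiV φ z (block q) :=
    Finset.prod_congr rfl fun q hq => phiV_update_of_notMem φ z v fun hkq =>
      Finset.ne_of_mem_erase hq hkq.symm
  refine ⟨∏ q ∈ Finset.univ.erase ⟦k⟧, phiV φ z (block q), a, b, fun v => ?_⟩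
  simp only [phiPart, finprod_eq_prod_of_fintype]
  rw [← Finset.mul_prod_erase _ _ (Finset.mem_univ ⟦k⟧), hrest, hk, mul_comm]

variable [Algebra ℂ A]

noncomputable def phiPartML (φ : A →ₗ[ℂ] ℂ) (σ : Setoid α) :
    MultilinearMap ℂ (fun _ : α => A) ℂ where
  toFun z := phiPart φ z σ
  map_update_add' z k x y := by
    obtain ⟨c, a, b, h⟩ := exists_phiPart_update_eq φ σ z k
    simp only [h, mul_add, add_mul, map_add]
  map_update_smul' z k r x := by
    obtain ⟨c, a, b, h⟩ := exists_phiPart_update_eq φ σ z k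
    simp only [h, mul_smul_comm, smul_mul_assoc, map_smul, smul_eq_mul]
    ring

noncomputable def cumML (φ : A →ₗ[ℂ] ℂ) (χ : α → Letter) (mu : Setoid α → Setoid α → ℂ)
    (π : Setoid α) : MultilinearMap ℂ (fun _ : α => A) ℂ :=
  ∑ σ ∈ (Set.toFinite {σ | σ ∈ IBNC χ ∧ σ ≤ π}).toFinset, mu σ π • phiPartML φ σ

theorem cumML_apply (φ : A →ₗ[ℂ] ℂ) (χ : α → Letter) (mu : Setoid α → Setoid α → ℂ)
    (π : Setoid α) (z : α → A) : cumML φ χ mu π z = cum φ χ mu z π := by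
  rw [cum, finsum_mem_eq_finite_toFinset_sum _ (Set.toFinite _)]
  simp [cumML, phiPartML]

end Multilinear

theorem CombFFB.cum_piecewise_eq_zero {A : Type*} [Ring A] [Algebra ℂ A] {φ : A →ₗ[ℂ] ℂ}
    {I : Type*} {F : I → Letter → NonUnitalSubalgebra ℂ A} (hF : CombFFB φ F) {n : ℕ}
    {χ : Fin n → Letter} {ω₁ ω₂ : Fin n → I} (hdisj : ∀ k k' : Fin n, ω₁ k ≠ ω₂ k')
    {z₁ z₂ : Fin n → A} (hz₁ : ∀ k, z₁ k ∈ F (ω₁ k) (χ k)) (hz₂ : ∀ k, z₂ k ∈ F (ω₂ k) (χ k))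
    {mu : Setoid (Fin n) → Setoid (Fin n) → ℂ} (hmu : IsMobius (IBNC χ) mu)
    {s : Finset (Fin n)} (hs : s ≠ ∅) (hs' : s ≠ Finset.univ) :
    cum φ χ mu (s.piecewise z₁ z₂) ⊤ = 0 := by
  classical
  obtain ⟨k, hk⟩ := Finset.nonempty_iff_ne_empty.mpr hs
  obtain ⟨k', hk'⟩ : ∃ k', k' ∉ s := by simpa [Finset.eq_univ_iff_forall] using hs'
  refine hF n χ (s.piecewise ω₁ ω₂) _ (fun j => ?_) ?_ mu hmu
  · by_cases hj : j ∈ s <;> simp [hj, hz₁ j, hz₂ j]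
  · rintro ⟨i, hi⟩
    exact hdisj k k' (by simpa [hk, hk'] using (hi k).trans (hi k').symm)

theorem cumulant_additive_of_disjoint_general {A : Type*} [Ring A] [Algebra ℂ A]
    (φ : A →ₗ[ℂ] ℂ) {I : Type*}
    (F : I → Letter → NonUnitalSubalgebra ℂ A) (hF : CombFFB φ F)
    (n : ℕ) (hn : 0 < n) (χ : Fin n → Letter) (ω₁ ω₂ : Fin n → I)
    (hdisj : ∀ k k' : Fin n, ω₁ k ≠ ω₂ k')
    (z₁ z₂ : Fin n → A)
    (hz₁ : ∀ k, z₁ k ∈ F (ω₁ k) (χ k)) (hz₂ : ∀ k, z₂ k ∈ F (ω₂ k) (χ k))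
    (mu : Setoid (Fin n) → Setoid (Fin n) → ℂ) (hmu : IsMobius (IBNC χ) mu) :
    cum (⇑φ) χ mu (fun k => z₁ k + z₂ k) ⊤ =
      cum (⇑φ) χ mu z₁ ⊤ + cum (⇑φ) χ mu z₂ ⊤ := by
  classical
  have huniv : (Finset.univ : Finset (Fin n)) ≠ ∅ :=
    (Finset.univ_nonempty_iff.mpr ⟨⟨0, hn⟩⟩).ne_empty
  calc cum φ χ mu (fun k => z₁ k + z₂ k) ⊤
      = ∑ s : Finset (Fin n), cum φ χ mu (s.piecewise z₁ z₂) ⊤ := by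
        simp only [← cumML_apply]
        exact (cumML φ χ mu ⊤).map_add_univ z₁ z₂
    _ = cum φ χ mu (Finset.univ.piecewise z₁ z₂) ⊤
          + cum φ χ mu ((∅ : Finset (Fin n)).piecewise z₁ z₂) ⊤ :=
        Finset.sum_eq_add_of_mem _ _ (Finset.mem_univ _) (Finset.mem_univ _) huniv
          fun s _ hs => hF.cum_piecewise_eq_zero hdisj hz₁ hz₂ hmu hs.2 hs.1
    _ = cum φ χ mu z₁ ⊤ + cum φ χ mu z₂ ⊤ := by
        rw [Finset.piecewise_univ, Finset.piecewise_empty]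

/-- For a combinatorially free-free-Boolean independent family of triples
of subalgebras `{(A_{i,ℓ}, A_{i,r}, A_{i,c})}_{i∈I}` of `(A,φ)`, the cumulants are additive
on families supported on disjoint sets of indices: if `ω₁({1,…,n}) ∩ ω₂({1,…,n}) = ∅`,
`z_{1,k} ∈ A_{ω₁(k),χ(k)}` and `z_{2,k} ∈ A_{ω₂(k),χ(k)}`, then
`κ_{χ,1ₙ}(z_{1,1}+z_{2,1},…,z_{1,n}+z_{2,n}) = κ_{χ,1ₙ}(z_{1,•}) + κ_{χ,1ₙ}(z_{2,•})`. -/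
theorem cumulant_additive_of_disjoint {A : Type*} [Ring A] [Algebra ℂ A]
    (φ : A →ₗ[ℂ] ℂ) (hφ : φ 1 = 1) {I : Type*}
    (F : I → Letter → NonUnitalSubalgebra ℂ A) (hF : CombFFB φ F)
    (n : ℕ) (hn : 0 < n) (χ : Fin n → Letter) (ω₁ ω₂ : Fin n → I)
    (hdisj : ∀ k k' : Fin n, ω₁ k ≠ ω₂ k')
    (z₁ z₂ : Fin n → A)
    (hz₁ : ∀ k, z₁ k ∈ F (ω₁ k) (χ k)) (hz₂ : ∀ k, z₂ k ∈ F (ω₂ k) (χ k))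
    (mu : Setoid (Fin n) → Setoid (Fin n) → ℂ) (hmu : IsMobius (IBNC χ) mu) :
    cum (⇑φ) χ mu (fun k => z₁ k + z₂ k) ⊤ =
      cum (⇑φ) χ mu z₁ ⊤ + cum (⇑φ) χ mu z₂ ⊤ :=
  cumulant_additive_of_disjoint_general φ F hF n hn χ ω₁ ω₂ hdisj z₁ z₂ hz₁ hz₂ mu hmu

end FFB
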